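/- Let X₁,…,X_M, X be exchangeable (i.i.d.) real-valued random variables and δ ∈ (0,1). Define γ as the ⌈(M+1)(1−δ)⌉-th smallest value among X₁,…,X_M (assume ⌈(M+1)(1−δ)⌉ ≤ M). Then P(X ≤ γ) ≥ 1 − δ. -/

import Mathlib

open MeasureTheory

/-- The `k`-th smallest value (0-indexed) among `x 0, …, x (M-1)`. -/
noncomputable def orderStat {M : ℕ} (x : Fin M → ℝ) (k : ℕ) : ℝ :=
  (Multiset.sort (Multiset.ofList (List.ofFn x)) (· ≤ ·)).getD k 0

/-!
Rank every score, test score included, by the number of scores strictly below it. The test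
score is at most the `r`-th smallest calibration score iff its rank is at most `r - 1`. Whatever
the values, at least `r` of the `M + 1` scores have rank at most `r - 1` (ties only lower ranks),
and by exchangeability each index has the same probability of doing so. Hence
`(M + 1) · P(rank of test ≤ r - 1) ≥ r ≥ (M + 1)(1 - δ)`.
-/

open Finset
open scoped ENNReal

section Rank

variable {ι α : Type*} [Fintype ι] [LinearOrder α]

def strictRank (a : ι → α) (i : ι) : ℕ := #{j | a j < a i}

theorem card_filter_comp_perm_lt (a : ι → α) (σ : Equiv.Perm ι) (t : α) :
    #{j | a (σ j) < t} = #{j | a j < t} :=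
  card_equiv σ (by simp)

theorem strictRank_comp_perm (a : ι → α) (σ : Equiv.Perm ι) (i : ι) :
    strictRank (a ∘ σ) i = strictRank a (σ i) :=
  card_filter_comp_perm_lt a σ _

theorem Monotone.strictRank_le {n : ℕ} {g : Fin n → α}
    (hg : Monotone g) (m : Fin n) : strictRank g m ≤ m :=
  (card_le_card fun j hj => by simpa using hg.reflect_lt (by simpa [strictRank] using hj)).trans_eq
    (Fin.card_Iio m)

theorem add_one_le_card_strictRank_le {n : ℕ} (a : Fin n → α)
    (k : Fin n) : (k : ℕ) + 1 ≤ #{i | strictRank a i ≤ k} := by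
  have hsub : (Iic k).map (Tuple.sort a).toEmbedding ⊆
      ({i | strictRank a i ≤ k} : Finset (Fin n)) := by
    intro i hi
    obtain ⟨m, hm, rfl⟩ := mem_map.mp hi
    rw [mem_filter_univ, Equiv.toEmbedding_apply, ← strictRank_comp_perm]
    exact ((Tuple.monotone_sort a).strictRank_le m).trans (by simpa using hm)
  simpa using card_le_card hsub

theorem strictRank_last {M : ℕ} (a : Fin (M + 1) → α) :
    strictRank a (Fin.last M) = #{j : Fin M | a j.castSucc < a (Fin.last M)} := by
  rw [strictRank, card_filter, card_filter, Fin.sum_univ_castSucc]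
  simp

theorem sort_ofFn_eq_ofFn_comp_sort {M : ℕ} (x : Fin M → α) :
    Multiset.sort (Multiset.ofList (List.ofFn x)) (· ≤ ·) = List.ofFn (x ∘ Tuple.sort x) :=
  List.Perm.eq_of_pairwise' (Multiset.pairwise_sort _ _)
    (List.sortedLE_ofFn_iff.mpr (Tuple.monotone_sort x)).pairwise
    (Multiset.coe_eq_coe.mp ((Multiset.sort_eq _ _).trans
      (Multiset.coe_eq_coe.mpr ((Tuple.sort x).ofFn_comp_perm x).symm)))

end Rank

theorem orderStat_eq_apply_sort {M : ℕ} (x : Fin M → ℝ) (k : Fin M) :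
    orderStat x k = x (Tuple.sort x k) := by
  rw [orderStat, sort_ofFn_eq_ofFn_comp_sort, List.getD_eq_getElem _ _ (by simp),
    List.getElem_ofFn]
  rfl

theorem le_orderStat_iff {M : ℕ} (x : Fin M → ℝ) (k : Fin M) (t : ℝ) :
    t ≤ orderStat x k ↔ #{j | x j < t} ≤ k := by
  rw [orderStat_eq_apply_sort, ← card_filter_comp_perm_lt x (Tuple.sort x), ← not_lt,
    ← not_lt, ← Function.comp_apply (f := x),
    ← Tuple.lt_card_lt_iff_apply_lt_of_monotone (Tuple.monotone_sort x)]
  rfl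

theorem last_le_orderStat_castSucc_iff {M : ℕ} (a : Fin (M + 1) → ℝ) (k : Fin M) :
    a (Fin.last M) ≤ orderStat (fun i : Fin M => a i.castSucc) k ↔
      strictRank a (Fin.last M) ≤ k := by
  rw [le_orderStat_iff, strictRank_last]

open Classical in
theorem natCast_le_sum_measure {Ω ι : Type*} [MeasurableSpace Ω] (ℙ : Measure Ω)
    [IsProbabilityMeasure ℙ] [Fintype ι] {A : ι → Set Ω} (hA : ∀ i, MeasurableSet (A i))
    {r : ℕ} (hr : ∀ ω, r ≤ #{i | ω ∈ A i}) : (r : ℝ≥0∞) ≤ ∑ i, ℙ (A i) := by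
  have hcount : ∀ ω, (#{i | ω ∈ A i} : ℝ≥0∞) = ∑ i, (A i).indicator 1 ω := by
    intro ω
    rw [card_eq_sum_ones, Nat.cast_sum, sum_filter]
    simp [Set.indicator_apply]
  calc (r : ℝ≥0∞) = ∫⁻ _, (r : ℝ≥0∞) ∂ℙ := by simp
    _ ≤ ∫⁻ ω, ∑ i, (A i).indicator 1 ω ∂ℙ :=
      lintegral_mono fun ω => (hcount ω) ▸ Nat.cast_le.mpr (hr ω)
    _ = ∑ i, ℙ (A i) := by
      rw [lintegral_finsetSum _ fun i _ => measurable_one.indicator (hA i)]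
      simp_rw [lintegral_indicator_one (hA _)]

def Exchangeable {Ω ι β : Type*} [MeasurableSpace Ω] [MeasurableSpace β] (ℙ : Measure Ω)
    (Y : ι → Ω → β) : Prop :=
  ∀ σ : Equiv.Perm ι,
    Measure.map (fun ω => fun i => Y (σ i) ω) ℙ = Measure.map (fun ω => fun i => Y i ω) ℙ

section Exchangeable

variable {Ω ι : Type*} [MeasurableSpace Ω] {ℙ : Measure Ω} [Fintype ι]

theorem measurableSet_strictRank_le (i : ι) (k : ℕ) :
    MeasurableSet {a : ι → ℝ | strictRank a i ≤ k} := by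
  have hrank : Measurable fun a : ι → ℝ => strictRank a i := by
    simp_rw [strictRank, card_filter]
    exact Finset.measurable_sum _ fun j _ => Measurable.ite
      (measurableSet_lt (measurable_pi_apply j) (measurable_pi_apply i))
      measurable_const measurable_const
  exact hrank measurableSet_Iic

theorem measure_strictRank_le_eq [DecidableEq ι] {Y : ι → Ω → ℝ}
    (hY : ∀ i, Measurable (Y i)) (hexch : Exchangeable ℙ Y) (i j : ι) (k : ℕ) :
    ℙ {ω | strictRank (fun l => Y l ω) i ≤ k} =
      ℙ {ω | strictRank (fun l => Y l ω) j ≤ k} := by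
  set σ := Equiv.swap j i
  have hpre : {ω | strictRank (fun l => Y l ω) i ≤ k} =
      (fun ω l => Y (σ l) ω) ⁻¹' {a | strictRank a j ≤ k} := by
    ext ω
    change strictRank (fun l => Y l ω) i ≤ k ↔ strictRank ((fun l => Y l ω) ∘ σ) j ≤ k
    rw [strictRank_comp_perm, Equiv.swap_apply_left]
  rw [hpre, ← Measure.map_apply (measurable_pi_lambda _ fun l => hY _)
    (measurableSet_strictRank_le j k), hexch,
    Measure.map_apply (measurable_pi_lambda _ hY) (measurableSet_strictRank_le j k)]
  rfl

theorem add_one_le_mul_measure_strictRank_le [IsProbabilityMeasure ℙ] {n : ℕ}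
    {Y : Fin n → Ω → ℝ} (hY : ∀ i, Measurable (Y i)) (hexch : Exchangeable ℙ Y)
    (k i : Fin n) :
    ((k : ℕ) + 1 : ℝ≥0∞) ≤ n * ℙ {ω | strictRank (fun l => Y l ω) i ≤ k} := by
  calc ((k : ℕ) + 1 : ℝ≥0∞) ≤ ∑ j, ℙ {ω | strictRank (fun l => Y l ω) j ≤ k} := by
        exact_mod_cast natCast_le_sum_measure ℙ
          (fun j => measurable_pi_lambda _ hY (measurableSet_strictRank_le j k))
          fun ω => by simpa using add_one_le_card_strictRank_le (fun l => Y l ω) k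
    _ = n * ℙ {ω | strictRank (fun l => Y l ω) i ≤ k} := by
        simp [measure_strictRank_le_eq hY hexch _ i k]

end Exchangeable

theorem conformal_coverage_general
    {Ω : Type*} [MeasurableSpace Ω] (ℙ : Measure Ω) [IsProbabilityMeasure ℙ]
    (M : ℕ) (hM : 0 < M) (δ : ℝ)
    (Y : Fin (M + 1) → Ω → ℝ) (hmeas : ∀ i, Measurable (Y i))
    (hexch : ∀ σ : Equiv.Perm (Fin (M + 1)),
      Measure.map (fun ω => fun i => Y (σ i) ω) ℙ = Measure.map (fun ω => fun i => Y i ω) ℙ)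
    (r : ℕ) (hr : r = ⌈((M : ℝ) + 1) * (1 - δ)⌉₊) (hrM : r ≤ M) :
    ENNReal.ofReal (1 - δ) ≤
      ℙ {ω | Y (Fin.last M) ω ≤ orderStat (fun i : Fin M => Y i.castSucc ω) (r - 1)} := by
  set k : Fin M := ⟨r - 1, by omega⟩
  have hevent : {ω | Y (Fin.last M) ω ≤ orderStat (fun i : Fin M => Y i.castSucc ω) (r - 1)} =
      {ω | strictRank (fun l => Y l ω) (Fin.last M) ≤ k} := by
    ext ω
    exact last_le_orderStat_castSucc_iff (fun l => Y l ω) k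
  have hcount := add_one_le_mul_measure_strictRank_le hmeas hexch k.castSucc (Fin.last M)
  have hquantile : ((M : ℝ) + 1) * (1 - δ) ≤ ((k : ℕ) + 1 : ℕ) :=
    calc ((M : ℝ) + 1) * (1 - δ) ≤ r := hr ▸ Nat.le_ceil _
      _ ≤ ((r - 1 + 1 : ℕ) : ℝ) := Nat.cast_le.mpr (by omega)
  rw [hevent, ← ENNReal.mul_le_mul_iff_right (by simp : ((M : ℝ≥0∞) + 1) ≠ 0) (by simp)]
  calc ((M : ℝ≥0∞) + 1) * ENNReal.ofReal (1 - δ)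
        = ENNReal.ofReal (((M : ℝ) + 1) * (1 - δ)) := by
        rw [ENNReal.ofReal_mul (by positivity), ENNReal.ofReal_add (by positivity) zero_le_one]
        simp
    _ ≤ ((k : ℕ) + 1 : ℕ) := ENNReal.ofReal_le_natCast.mpr hquantile
    _ ≤ _ := by exact_mod_cast hcount

/-- Split conformal prediction coverage: if `Y 0, …, Y (M-1)` are the calibration
scores and `Y (Fin.last M)` is the test score, all exchangeable, and `γ` is the
`⌈(M+1)(1-δ)⌉`-th smallest calibration score, then `P(Y_test ≤ γ) ≥ 1 - δ`. -/
theorem conformal_coverage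
    {Ω : Type*} [MeasurableSpace Ω] (ℙ : Measure Ω) [IsProbabilityMeasure ℙ]
    (M : ℕ) (hM : 0 < M) (δ : ℝ) (hδ : δ ∈ Set.Ioo (0 : ℝ) 1)
    (Y : Fin (M + 1) → Ω → ℝ) (hmeas : ∀ i, Measurable (Y i))
    (hexch : ∀ σ : Equiv.Perm (Fin (M + 1)),
      Measure.map (fun ω => fun i => Y (σ i) ω) ℙ = Measure.map (fun ω => fun i => Y i ω) ℙ)
    (r : ℕ) (hr : r = ⌈((M : ℝ) + 1) * (1 - δ)⌉₊) (hrM : r ≤ M) :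
    ENNReal.ofReal (1 - δ) ≤
      ℙ {ω | Y (Fin.last M) ω ≤ orderStat (fun i : Fin M => Y i.castSucc ω) (r - 1)} :=
  conformal_coverage_general ℙ M hM δ Y hmeas hexch r hr hrM
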